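/- arXiv:0710.3139 — 3 statements merged into one kernel-verified Lean document; each statement's English description precedes it below -/
import Mathlib

section
/- The Γ₂ operator of the Heisenberg sub-Laplacian satisfies the identity Γ₂(f,f) = (X²f)² + (Y²f)² + (1/2)((XY+YX)f)² + (1/2)(Zf)² + 2(XZf·Yf - YZf·Xf) for every smooth f : ℝ³ → ℝ. -/
/-- X = ∂_x - (y/2)∂_z as a first-order differential operator on ℝ³. -/
noncomputable def Xop (f : ℝ × ℝ × ℝ → ℝ) : ℝ × ℝ × ℝ → ℝ :=
  fun p => fderiv ℝ f p (1, 0, -(p.2.1 / 2))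

/-- Y = ∂_y + (x/2)∂_z. -/
noncomputable def Yop (f : ℝ × ℝ × ℝ → ℝ) : ℝ × ℝ × ℝ → ℝ :=
  fun p => fderiv ℝ f p (0, 1, p.1 / 2)

/-- Z = ∂_z. -/
noncomputable def Zop (f : ℝ × ℝ × ℝ → ℝ) : ℝ × ℝ × ℝ → ℝ :=
  fun p => fderiv ℝ f p (0, 0, 1)

/-- The sub-Laplacian L = X² + Y². -/
noncomputable def Lop (f : ℝ × ℝ × ℝ → ℝ) : ℝ × ℝ × ℝ → ℝ :=
  fun p => Xop (Xop f) p + Yop (Yop f) p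

/-- Γ(f,g) = Xf·Xg + Yf·Yg. -/
noncomputable def GammaB (f g : ℝ × ℝ × ℝ → ℝ) : ℝ × ℝ × ℝ → ℝ :=
  fun p => Xop f p * Xop g p + Yop f p * Yop g p

/-- Γ₂(f,f) = (1/2)(LΓ(f,f) - 2Γ(f,Lf)). -/
noncomputable def Gamma2 (f : ℝ × ℝ × ℝ → ℝ) : ℝ × ℝ × ℝ → ℝ :=
  fun p => (1 / 2) * (Lop (GammaB f f) p - 2 * GammaB f (Lop f) p)

namespace HAux

open ContinuousLinearMap

variable {g h : ℝ × ℝ × ℝ → ℝ}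

/-- The linear part of the X vector field. -/
noncomputable def TX : (ℝ × ℝ × ℝ) →L[ℝ] (ℝ × ℝ × ℝ) :=
  (0 : (ℝ × ℝ × ℝ) →L[ℝ] ℝ).prod ((0 : (ℝ × ℝ × ℝ) →L[ℝ] ℝ).prod
    ((-(2⁻¹ : ℝ)) • ((ContinuousLinearMap.fst ℝ ℝ ℝ).comp (ContinuousLinearMap.snd ℝ ℝ (ℝ × ℝ)))))

noncomputable def TY : (ℝ × ℝ × ℝ) →L[ℝ] (ℝ × ℝ × ℝ) :=
  (0 : (ℝ × ℝ × ℝ) →L[ℝ] ℝ).prod ((0 : (ℝ × ℝ × ℝ) →L[ℝ] ℝ).prod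
    (((2⁻¹ : ℝ)) • (ContinuousLinearMap.fst ℝ ℝ (ℝ × ℝ))))

lemma hasFDerivAt_uX (p : ℝ × ℝ × ℝ) :
    HasFDerivAt (fun q : ℝ × ℝ × ℝ => ((1, 0, -(q.2.1 / 2)) : ℝ × ℝ × ℝ)) TX p := by
  have : (fun q : ℝ × ℝ × ℝ => ((1, 0, -(q.2.1 / 2)) : ℝ × ℝ × ℝ))
      = fun q => ((1, 0, 0) : ℝ × ℝ × ℝ) + TX q := by
    funext q
    simp [TX, Prod.ext_iff]
    ring
  rw [this]
  exact TX.hasFDerivAt.const_add _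

lemma hasFDerivAt_uY (p : ℝ × ℝ × ℝ) :
    HasFDerivAt (fun q : ℝ × ℝ × ℝ => ((0, 1, q.1 / 2) : ℝ × ℝ × ℝ)) TY p := by
  have : (fun q : ℝ × ℝ × ℝ => ((0, 1, q.1 / 2) : ℝ × ℝ × ℝ))
      = fun q => ((0, 1, 0) : ℝ × ℝ × ℝ) + TY q := by
    funext q
    simp [TY, Prod.ext_iff]
    ring
  rw [this]
  exact TY.hasFDerivAt.const_add _

lemma smooth_Xop (hg : ContDiff ℝ (⊤ : ℕ∞) g) : ContDiff ℝ (⊤ : ℕ∞) (Xop g) := by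
  apply (hg.fderiv_right (by simp)).clm_apply
  exact ContDiff.prodMk contDiff_const (ContDiff.prodMk contDiff_const
    (((contDiff_fst.comp contDiff_snd).div_const 2).neg))

lemma smooth_Yop (hg : ContDiff ℝ (⊤ : ℕ∞) g) : ContDiff ℝ (⊤ : ℕ∞) (Yop g) := by
  apply (hg.fderiv_right (by simp)).clm_apply
  exact ContDiff.prodMk contDiff_const (ContDiff.prodMk contDiff_const
    (contDiff_fst.div_const 2))

lemma smooth_Zop (hg : ContDiff ℝ (⊤ : ℕ∞) g) : ContDiff ℝ (⊤ : ℕ∞) (Zop g) :=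
  (hg.fderiv_right (by simp)).clm_apply contDiff_const

/-- derivative of Xop g in a direction. -/
lemma fderiv_Xop_apply (hg : ContDiff ℝ (⊤ : ℕ∞) g) (p v : ℝ × ℝ × ℝ) :
    fderiv ℝ (Xop g) p v
      = fderiv ℝ (fderiv ℝ g) p v (1, 0, -(p.2.1 / 2))
        - v.2.1 / 2 * fderiv ℝ g p (0, 0, 1) := by
  have hc : DifferentiableAt ℝ (fderiv ℝ g) p :=
    ((hg.fderiv_right (m := (⊤ : ℕ∞)) (by simp)).differentiable (by simp)) p
  have hu := hasFDerivAt_uX p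
  have h := fderiv_clm_apply (𝕜 := ℝ) hc hu.differentiableAt
  have hXg : Xop g = fun q => (fderiv ℝ g q) ((1, 0, -(q.2.1 / 2)) : ℝ × ℝ × ℝ) := rfl
  rw [hXg, h, hu.fderiv]
  have hTv : TX v = ((-(v.2.1 / 2)) • ((0, 0, 1) : ℝ × ℝ × ℝ)) := by
    simp [TX, Prod.ext_iff]; ring
  simp only [ContinuousLinearMap.add_apply, ContinuousLinearMap.coe_comp', Function.comp_apply,
    ContinuousLinearMap.flip_apply, hTv, map_smul, smul_eq_mul]
  ring

lemma fderiv_Yop_apply (hg : ContDiff ℝ (⊤ : ℕ∞) g) (p v : ℝ × ℝ × ℝ) :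
    fderiv ℝ (Yop g) p v
      = fderiv ℝ (fderiv ℝ g) p v (0, 1, p.1 / 2)
        + v.1 / 2 * fderiv ℝ g p (0, 0, 1) := by
  have hc : DifferentiableAt ℝ (fderiv ℝ g) p :=
    ((hg.fderiv_right (m := (⊤ : ℕ∞)) (by simp)).differentiable (by simp)) p
  have hu := hasFDerivAt_uY p
  have h := fderiv_clm_apply (𝕜 := ℝ) hc hu.differentiableAt
  have hYg : Yop g = fun q => (fderiv ℝ g q) ((0, 1, q.1 / 2) : ℝ × ℝ × ℝ) := rfl
  rw [hYg, h, hu.fderiv]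
  have hTv : TY v = (((v.1 / 2)) • ((0, 0, 1) : ℝ × ℝ × ℝ)) := by
    simp [TY, Prod.ext_iff]; ring
  simp only [ContinuousLinearMap.add_apply, ContinuousLinearMap.coe_comp', Function.comp_apply,
    ContinuousLinearMap.flip_apply, hTv, map_smul, smul_eq_mul]
  ring

lemma fderiv_Zop_apply (hg : ContDiff ℝ (⊤ : ℕ∞) g) (p v : ℝ × ℝ × ℝ) :
    fderiv ℝ (Zop g) p v = fderiv ℝ (fderiv ℝ g) p v (0, 0, 1) := by
  have hc : DifferentiableAt ℝ (fderiv ℝ g) p :=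
    ((hg.fderiv_right (m := (⊤ : ℕ∞)) (by simp)).differentiable (by simp)) p
  have h := fderiv_clm_apply (𝕜 := ℝ) hc (differentiableAt_const ((0, 0, 1) : ℝ × ℝ × ℝ))
  have hZg : Zop g = fun q => (fderiv ℝ g q) ((0, 0, 1) : ℝ × ℝ × ℝ) := rfl
  rw [hZg, h]
  simp

lemma symm2 (hg : ContDiff ℝ (⊤ : ℕ∞) g) (p v w : ℝ × ℝ × ℝ) :
    fderiv ℝ (fderiv ℝ g) p v w = fderiv ℝ (fderiv ℝ g) p w v :=
  (hg.contDiffAt.isSymmSndFDerivAt (by rw [minSmoothness_of_isRCLikeNormedField]; exact WithTop.coe_le_coe.mpr le_top)) v w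

/-- Commutator [X,Y] = Z. -/
lemma commXY (hg : ContDiff ℝ (⊤ : ℕ∞) g) (p : ℝ × ℝ × ℝ) :
    Xop (Yop g) p = Yop (Xop g) p + Zop g p := by
  have h1 : Xop (Yop g) p = fderiv ℝ (Yop g) p (1, 0, -(p.2.1 / 2)) := rfl
  have h2 : Yop (Xop g) p = fderiv ℝ (Xop g) p (0, 1, p.1 / 2) := rfl
  rw [h1, h2, fderiv_Yop_apply hg, fderiv_Xop_apply hg,
    symm2 hg p (1, 0, -(p.2.1 / 2)) (0, 1, p.1 / 2)]
  show _ = _ + Zop g p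
  rw [Zop]
  ring

lemma commXZ (hg : ContDiff ℝ (⊤ : ℕ∞) g) (p : ℝ × ℝ × ℝ) :
    Xop (Zop g) p = Zop (Xop g) p := by
  have h1 : Xop (Zop g) p = fderiv ℝ (Zop g) p (1, 0, -(p.2.1 / 2)) := rfl
  have h2 : Zop (Xop g) p = fderiv ℝ (Xop g) p (0, 0, 1) := rfl
  rw [h1, h2, fderiv_Zop_apply hg, fderiv_Xop_apply hg,
    symm2 hg p (1, 0, -(p.2.1 / 2)) (0, 0, 1)]
  norm_num

lemma commYZ (hg : ContDiff ℝ (⊤ : ℕ∞) g) (p : ℝ × ℝ × ℝ) :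
    Yop (Zop g) p = Zop (Yop g) p := by
  have h1 : Yop (Zop g) p = fderiv ℝ (Zop g) p (0, 1, p.1 / 2) := rfl
  have h2 : Zop (Yop g) p = fderiv ℝ (Yop g) p (0, 0, 1) := rfl
  rw [h1, h2, fderiv_Zop_apply hg, fderiv_Yop_apply hg,
    symm2 hg p (0, 1, p.1 / 2) (0, 0, 1)]
  norm_num

/-- Leibniz and additivity. -/
lemma Xop_add (ha : DifferentiableAt ℝ g p) (hb : DifferentiableAt ℝ h p) :
    Xop (fun q => g q + h q) p = Xop g p + Xop h p := by
  simp only [Xop, fderiv_fun_add ha hb, ContinuousLinearMap.add_apply]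

lemma Xop_mul {p : ℝ × ℝ × ℝ} (ha : DifferentiableAt ℝ g p) (hb : DifferentiableAt ℝ h p) :
    Xop (fun q => g q * h q) p = Xop g p * h p + g p * Xop h p := by
  simp only [Xop, fderiv_fun_mul ha hb, ContinuousLinearMap.add_apply,
    ContinuousLinearMap.smul_apply, smul_eq_mul]
  ring

lemma Yop_add {p : ℝ × ℝ × ℝ} (ha : DifferentiableAt ℝ g p) (hb : DifferentiableAt ℝ h p) :
    Yop (fun q => g q + h q) p = Yop g p + Yop h p := by
  simp only [Yop, fderiv_fun_add ha hb, ContinuousLinearMap.add_apply]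

lemma Yop_sub {p : ℝ × ℝ × ℝ} (ha : DifferentiableAt ℝ g p) (hb : DifferentiableAt ℝ h p) :
    Yop (fun q => g q - h q) p = Yop g p - Yop h p := by
  simp only [Yop, fderiv_fun_sub ha hb, ContinuousLinearMap.sub_apply]

lemma Yop_mul {p : ℝ × ℝ × ℝ} (ha : DifferentiableAt ℝ g p) (hb : DifferentiableAt ℝ h p) :
    Yop (fun q => g q * h q) p = Yop g p * h p + g p * Yop h p := by
  simp only [Yop, fderiv_fun_mul ha hb, ContinuousLinearMap.add_apply,
    ContinuousLinearMap.smul_apply, smul_eq_mul]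
  ring

end HAux

theorem heisenberg_Gamma2_formula (f : ℝ × ℝ × ℝ → ℝ) (hf : ContDiff ℝ (⊤ : ℕ∞) f)
    (p : ℝ × ℝ × ℝ) :
    Gamma2 f p =
      (Xop (Xop f) p) ^ 2 + (Yop (Yop f) p) ^ 2 +
        (1 / 2) * (Xop (Yop f) p + Yop (Xop f) p) ^ 2 + (1 / 2) * (Zop f p) ^ 2 +
        2 * (Xop (Zop f) p * Yop f p - Yop (Zop f) p * Xop f p) := by
  have hX : ContDiff ℝ (⊤ : ℕ∞) (Xop f) := HAux.smooth_Xop hf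
  have hY : ContDiff ℝ (⊤ : ℕ∞) (Yop f) := HAux.smooth_Yop hf
  have hZ : ContDiff ℝ (⊤ : ℕ∞) (Zop f) := HAux.smooth_Zop hf
  have hXX : ContDiff ℝ (⊤ : ℕ∞) (Xop (Xop f)) := HAux.smooth_Xop hX
  have hXY : ContDiff ℝ (⊤ : ℕ∞) (Xop (Yop f)) := HAux.smooth_Xop hY
  have hYX : ContDiff ℝ (⊤ : ℕ∞) (Yop (Xop f)) := HAux.smooth_Yop hX
  have hYY : ContDiff ℝ (⊤ : ℕ∞) (Yop (Yop f)) := HAux.smooth_Yop hY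
  have dX : ∀ q, DifferentiableAt ℝ (Xop f) q := fun q => hX.differentiable (by simp) q
  have dY : ∀ q, DifferentiableAt ℝ (Yop f) q := fun q => hY.differentiable (by simp) q
  have dZ : ∀ q, DifferentiableAt ℝ (Zop f) q := fun q => hZ.differentiable (by simp) q
  have dXX : ∀ q, DifferentiableAt ℝ (Xop (Xop f)) q := fun q => hXX.differentiable (by simp) q
  have dXY : ∀ q, DifferentiableAt ℝ (Xop (Yop f)) q := fun q => hXY.differentiable (by simp) q
  have dYX : ∀ q, DifferentiableAt ℝ (Yop (Xop f)) q := fun q => hYX.differentiable (by simp) q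
  have dYY : ∀ q, DifferentiableAt ℝ (Yop (Yop f)) q := fun q => hYY.differentiable (by simp) q
  have hGamma : GammaB f f = fun q => Xop f q * Xop f q + Yop f q * Yop f q := rfl
  -- first derivatives of Gamma
  have hXG : Xop (GammaB f f) = fun q =>
      (Xop (Xop f) q * Xop f q + Xop f q * Xop (Xop f) q)
      + (Xop (Yop f) q * Yop f q + Yop f q * Xop (Yop f) q) := by
    funext q
    rw [hGamma, HAux.Xop_add ((hX.mul hX).differentiable (by simp) q)
        ((hY.mul hY).differentiable (by simp) q),
      HAux.Xop_mul (dX q) (dX q), HAux.Xop_mul (dY q) (dY q)]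
  have hYG : Yop (GammaB f f) = fun q =>
      (Yop (Xop f) q * Xop f q + Xop f q * Yop (Xop f) q)
      + (Yop (Yop f) q * Yop f q + Yop f q * Yop (Yop f) q) := by
    funext q
    rw [hGamma, HAux.Yop_add ((hX.mul hX).differentiable (by simp) q)
        ((hY.mul hY).differentiable (by simp) q),
      HAux.Yop_mul (dX q) (dX q), HAux.Yop_mul (dY q) (dY q)]
  -- second derivatives of Gamma at p
  have hA1 : ContDiff ℝ (⊤ : ℕ∞) (fun q => Xop (Xop f) q * Xop f q) := hXX.mul hX
  have hA2 : ContDiff ℝ (⊤ : ℕ∞) (fun q => Xop f q * Xop (Xop f) q) := hX.mul hXX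
  have hB1 : ContDiff ℝ (⊤ : ℕ∞) (fun q => Xop (Yop f) q * Yop f q) := hXY.mul hY
  have hB2 : ContDiff ℝ (⊤ : ℕ∞) (fun q => Yop f q * Xop (Yop f) q) := hY.mul hXY
  have hC1 : ContDiff ℝ (⊤ : ℕ∞) (fun q => Yop (Xop f) q * Xop f q) := hYX.mul hX
  have hC2 : ContDiff ℝ (⊤ : ℕ∞) (fun q => Xop f q * Yop (Xop f) q) := hX.mul hYX
  have hD1 : ContDiff ℝ (⊤ : ℕ∞) (fun q => Yop (Yop f) q * Yop f q) := hYY.mul hY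
  have hD2 : ContDiff ℝ (⊤ : ℕ∞) (fun q => Yop f q * Yop (Yop f) q) := hY.mul hYY
  have eXXG : Xop (Xop (GammaB f f)) p =
      ((Xop (Xop (Xop f)) p * Xop f p + Xop (Xop f) p * Xop (Xop f) p)
        + (Xop (Xop f) p * Xop (Xop f) p + Xop f p * Xop (Xop (Xop f)) p))
      + ((Xop (Xop (Yop f)) p * Yop f p + Xop (Yop f) p * Xop (Yop f) p)
        + (Xop (Yop f) p * Xop (Yop f) p + Yop f p * Xop (Xop (Yop f)) p)) := by
    rw [hXG,
      HAux.Xop_add ((hA1.add hA2).differentiable (by simp) p) ((hB1.add hB2).differentiable (by simp) p),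
      HAux.Xop_add (hA1.differentiable (by simp) p) (hA2.differentiable (by simp) p),
      HAux.Xop_add (hB1.differentiable (by simp) p) (hB2.differentiable (by simp) p),
      HAux.Xop_mul (dXX p) (dX p), HAux.Xop_mul (dX p) (dXX p),
      HAux.Xop_mul (dXY p) (dY p), HAux.Xop_mul (dY p) (dXY p)]
  have eYYG : Yop (Yop (GammaB f f)) p =
      ((Yop (Yop (Xop f)) p * Xop f p + Yop (Xop f) p * Yop (Xop f) p)
        + (Yop (Xop f) p * Yop (Xop f) p + Xop f p * Yop (Yop (Xop f)) p))
      + ((Yop (Yop (Yop f)) p * Yop f p + Yop (Yop f) p * Yop (Yop f) p)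
        + (Yop (Yop f) p * Yop (Yop f) p + Yop f p * Yop (Yop (Yop f)) p)) := by
    rw [hYG,
      HAux.Yop_add ((hC1.add hC2).differentiable (by simp) p) ((hD1.add hD2).differentiable (by simp) p),
      HAux.Yop_add (hC1.differentiable (by simp) p) (hC2.differentiable (by simp) p),
      HAux.Yop_add (hD1.differentiable (by simp) p) (hD2.differentiable (by simp) p),
      HAux.Yop_mul (dYX p) (dX p), HAux.Yop_mul (dX p) (dYX p),
      HAux.Yop_mul (dYY p) (dY p), HAux.Yop_mul (dY p) (dYY p)]
  -- derivatives of Lf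
  have hLf : Lop f = fun q => Xop (Xop f) q + Yop (Yop f) q := rfl
  have eXL : Xop (Lop f) p = Xop (Xop (Xop f)) p + Xop (Yop (Yop f)) p := by
    rw [hLf, HAux.Xop_add (dXX p) (dYY p)]
  have eYL : Yop (Lop f) p = Yop (Xop (Xop f)) p + Yop (Yop (Yop f)) p := by
    rw [hLf, HAux.Yop_add (dXX p) (dYY p)]
  -- commutator identities
  have c2 : Yop (Yop (Xop f)) p = Xop (Yop (Yop f)) p - 2 * Yop (Zop f) p := by
    have hfunc : Yop (Xop f) = fun q => Xop (Yop f) q - Zop f q := by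
      funext q
      have := HAux.commXY hf q
      linarith
    calc Yop (Yop (Xop f)) p = Yop (fun q => Xop (Yop f) q - Zop f q) p := by rw [hfunc]
      _ = Yop (Xop (Yop f)) p - Yop (Zop f) p := HAux.Yop_sub (dXY p) (dZ p)
      _ = (Xop (Yop (Yop f)) p - Zop (Yop f) p) - Yop (Zop f) p := by
          have := HAux.commXY hY p
          linarith
      _ = Xop (Yop (Yop f)) p - 2 * Yop (Zop f) p := by
          have := HAux.commYZ hf p
          linarith
  have c3 : Xop (Xop (Yop f)) p = Yop (Xop (Xop f)) p + 2 * Xop (Zop f) p := by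
    have hfunc : Xop (Yop f) = fun q => Yop (Xop f) q + Zop f q := by
      funext q
      exact HAux.commXY hf q
    calc Xop (Xop (Yop f)) p = Xop (fun q => Yop (Xop f) q + Zop f q) p := by rw [hfunc]
      _ = Xop (Yop (Xop f)) p + Xop (Zop f) p := HAux.Xop_add (dYX p) (dZ p)
      _ = (Yop (Xop (Xop f)) p + Zop (Xop f) p) + Xop (Zop f) p := by rw [HAux.commXY hX p]
      _ = Yop (Xop (Xop f)) p + 2 * Xop (Zop f) p := by
          have := HAux.commXZ hf p
          linarith
  have c1 : Xop (Yop f) p = Yop (Xop f) p + Zop f p := HAux.commXY hf p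
  have hG2 : Gamma2 f p = (1 / 2) * ((Xop (Xop (GammaB f f)) p + Yop (Yop (GammaB f f)) p)
      - 2 * (Xop f p * Xop (Lop f) p + Yop f p * Yop (Lop f) p)) := rfl
  rw [hG2, eXXG, eYYG, eXL, eYL, c2, c3, c1]
  ring
end

section
/- For every nonnegative real t and the function R(x,y,z) = (x²+y²)² + z² on ℝ³, and every positive integer q, there exists a constant B_q > 0 such that L((1+R)^{-q}) ≤ B_q (1+R)^{-q} pointwise, where L is the Heisenberg sub-Laplacian. -/
/-- R(x,y,z) = (x²+y²)² + z². -/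
noncomputable def Rfun (p : ℝ × ℝ × ℝ) : ℝ := (p.1 ^ 2 + p.2.1 ^ 2) ^ 2 + p.2.2 ^ 2


section Aux
open ContinuousLinearMap

open ContinuousLinearMap

noncomputable def D3 (a b c : ℝ) : ℝ × ℝ × ℝ →L[ℝ] ℝ :=
  a • fst ℝ ℝ (ℝ × ℝ) + b • ((fst ℝ ℝ ℝ).comp (snd ℝ ℝ (ℝ × ℝ)))
    + c • ((snd ℝ ℝ ℝ).comp (snd ℝ ℝ (ℝ × ℝ)))

@[simp] lemma D3_apply (a b c : ℝ) (v : ℝ × ℝ × ℝ) :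
    D3 a b c v = a * v.1 + b * v.2.1 + c * v.2.2 := by
  simp [D3]


lemma hx' (p : ℝ × ℝ × ℝ) : HasFDerivAt (fun p : ℝ × ℝ × ℝ => p.1) (D3 1 0 0) p := by
  refine hasFDerivAt_fst.congr_fderiv ?_
  refine ContinuousLinearMap.ext fun v => ?_
  simp

lemma hy' (p : ℝ × ℝ × ℝ) : HasFDerivAt (fun p : ℝ × ℝ × ℝ => p.2.1) (D3 0 1 0) p := by
  have h1 : HasFDerivAt (Prod.fst : ℝ × ℝ → ℝ) (fst ℝ ℝ ℝ) p.2 := hasFDerivAt_fst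
  refine (h1.comp p hasFDerivAt_snd).congr_fderiv ?_
  refine ContinuousLinearMap.ext fun v => ?_
  simp

lemma hz' (p : ℝ × ℝ × ℝ) : HasFDerivAt (fun p : ℝ × ℝ × ℝ => p.2.2) (D3 0 0 1) p := by
  have h1 : HasFDerivAt (Prod.snd : ℝ × ℝ → ℝ) (snd ℝ ℝ ℝ) p.2 := hasFDerivAt_snd
  refine (h1.comp p hasFDerivAt_snd).congr_fderiv ?_
  refine ContinuousLinearMap.ext fun v => ?_
  simp

lemma hR' (p : ℝ × ℝ × ℝ) : HasFDerivAt Rfun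
    (D3 (4*p.1*(p.1^2+p.2.1^2)) (4*p.2.1*(p.1^2+p.2.1^2)) (2*p.2.2)) p := by
  have hρ := ((hx' p).mul (hx' p)).add ((hy' p).mul (hy' p))
  have h := (hρ.mul hρ).add ((hz' p).mul (hz' p))
  convert h using 1 <;> first | rfl | skip
  · funext r; simp [Rfun]; ring
  · refine ContinuousLinearMap.ext fun v => ?_
    simp
    ring

lemma R_nonneg (p : ℝ × ℝ × ℝ) : 0 ≤ Rfun p := by
  simp only [Rfun]; positivity

lemma u_pos (p : ℝ × ℝ × ℝ) : 0 < 1 + Rfun p := by linarith [R_nonneg p]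

lemma hinv' (m : ℕ) (hm : 0 < m) (p : ℝ × ℝ × ℝ) :
    HasFDerivAt (fun r => ((1 + Rfun r) ^ m)⁻¹)
      ((-(m:ℝ) * ((1 + Rfun p) ^ (m+1))⁻¹) •
        D3 (4*p.1*(p.1^2+p.2.1^2)) (4*p.2.1*(p.1^2+p.2.1^2)) (2*p.2.2)) p := by
  have hu := u_pos p
  have ha : HasDerivAt (fun t : ℝ => 1 + t) 1 (Rfun p) := (hasDerivAt_id _).const_add 1
  have hb := ha.pow m
  have hc := hb.inv (pow_ne_zero _ (ne_of_gt hu))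
  have hscal : HasDerivAt (fun t : ℝ => ((1 + t) ^ m)⁻¹)
      (-(m:ℝ) * ((1 + Rfun p) ^ (m+1))⁻¹) (Rfun p) := by
    convert hc using 1 <;> first | rfl | skip
    simp only [Pi.pow_apply]
    have key : (1 + Rfun p) ^ (m-1) * (1 + Rfun p) ^ (m+1) = ((1 + Rfun p) ^ m) ^ 2 := by
      rw [← pow_add, ← pow_mul]; congr 1; omega
    rw [eq_div_iff (by positivity), mul_one]
    field_simp
    nlinarith [key, pow_pos hu (m-1), pow_pos hu (m+1), pow_pos hu m]
  exact hscal.comp_hasFDerivAt p (hR' p)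


noncomputable def XRf (p : ℝ × ℝ × ℝ) : ℝ := 4*p.1*(p.1^2+p.2.1^2) - p.2.1*p.2.2
noncomputable def YRf (p : ℝ × ℝ × ℝ) : ℝ := 4*p.2.1*(p.1^2+p.2.1^2) + p.1*p.2.2
noncomputable def cf (m : ℕ) (p : ℝ × ℝ × ℝ) : ℝ := -(m:ℝ) * ((1 + Rfun p) ^ (m+1))⁻¹

lemma Xop_f (q : ℕ) (hq : 0 < q) :
    Xop (fun r => ((1 + Rfun r) ^ q)⁻¹) = fun p => cf q p * XRf p := by
  funext p
  rw [Xop, (hinv' q hq p).fderiv]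
  simp only [ContinuousLinearMap.smul_apply, D3_apply, smul_eq_mul, cf, XRf]
  ring

lemma Yop_f (q : ℕ) (hq : 0 < q) :
    Yop (fun r => ((1 + Rfun r) ^ q)⁻¹) = fun p => cf q p * YRf p := by
  funext p
  rw [Yop, (hinv' q hq p).fderiv]
  simp only [ContinuousLinearMap.smul_apply, D3_apply, smul_eq_mul, cf, YRf]
  ring

lemma hρ' (p : ℝ × ℝ × ℝ) :
    HasFDerivAt (fun p : ℝ × ℝ × ℝ => p.1^2 + p.2.1^2) (D3 (2*p.1) (2*p.2.1) 0) p := by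
  convert ((hx' p).mul (hx' p)).add ((hy' p).mul (hy' p)) using 1 <;> first | rfl | skip
  · funext r; simp only [Pi.add_apply, Pi.mul_apply]; ring
  · refine ContinuousLinearMap.ext fun v => ?_; simp; ring

lemma hcf' (q : ℕ) (p : ℝ × ℝ × ℝ) :
    HasFDerivAt (cf q)
      ((-(q:ℝ)) • ((-((q:ℝ)+1) * ((1 + Rfun p) ^ (q+1+1))⁻¹) •
        D3 (4*p.1*(p.1^2+p.2.1^2)) (4*p.2.1*(p.1^2+p.2.1^2)) (2*p.2.2))) p := by
  have h := (hinv' (q+1) (by omega) p).const_mul (-(q:ℝ))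
  convert h using 2 <;> first | rfl | skip
  push_cast
  ring

lemma hXRf' (p : ℝ × ℝ × ℝ) : HasFDerivAt XRf
    ((4*p.1) • D3 (2*p.1) (2*p.2.1) 0 + (p.1^2+p.2.1^2) • ((4:ℝ) • D3 1 0 0)
      - (p.2.1 • D3 0 0 1 + p.2.2 • D3 0 1 0)) p :=
  (((hx' p).const_mul 4).mul (hρ' p)).sub ((hy' p).mul (hz' p))

lemma hYRf' (p : ℝ × ℝ × ℝ) : HasFDerivAt YRf
    ((4*p.2.1) • D3 (2*p.1) (2*p.2.1) 0 + (p.1^2+p.2.1^2) • ((4:ℝ) • D3 0 1 0)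
      + (p.1 • D3 0 0 1 + p.2.2 • D3 1 0 0)) p :=
  (((hy' p).const_mul 4).mul (hρ' p)).add ((hx' p).mul (hz' p))

lemma XXf (q : ℕ) (p : ℝ × ℝ × ℝ) :
    Xop (fun r => cf q r * XRf r) p =
      (q:ℝ)*((q:ℝ)+1)*((1 + Rfun p) ^ (q+1+1))⁻¹ * XRf p ^ 2
        + cf q p * (4*(p.1^2+p.2.1^2) + 8*p.1^2 + p.2.1^2/2) := by
  have h : HasFDerivAt (fun r => cf q r * XRf r) _ p := (hcf' q p).mul (hXRf' p)
  rw [Xop, h.fderiv]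
  simp only [ContinuousLinearMap.add_apply, ContinuousLinearMap.sub_apply,
    ContinuousLinearMap.smul_apply, D3_apply, smul_eq_mul, cf, XRf]
  ring

lemma YYf (q : ℕ) (p : ℝ × ℝ × ℝ) :
    Yop (fun r => cf q r * YRf r) p =
      (q:ℝ)*((q:ℝ)+1)*((1 + Rfun p) ^ (q+1+1))⁻¹ * YRf p ^ 2
        + cf q p * (4*(p.1^2+p.2.1^2) + 8*p.2.1^2 + p.1^2/2) := by
  have h : HasFDerivAt (fun r => cf q r * YRf r) _ p := (hcf' q p).mul (hYRf' p)
  rw [Yop, h.fderiv]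
  simp only [ContinuousLinearMap.add_apply, ContinuousLinearMap.sub_apply,
    ContinuousLinearMap.smul_apply, D3_apply, smul_eq_mul, cf, YRf]
  ring


end Aux

theorem heisenberg_Lyapunov_bound (q : ℕ) (hq : 0 < q) :
    ∃ B : ℝ, 0 < B ∧
      ∀ p : ℝ × ℝ × ℝ, Lop (fun r => ((1 + Rfun r) ^ q)⁻¹) p ≤ B * ((1 + Rfun p) ^ q)⁻¹ := by
  refine ⟨16 * q * (q + 1), by positivity, fun p => ?_⟩
  have hu := u_pos p
  have hρ : (0:ℝ) ≤ p.1^2 + p.2.1^2 := by positivity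
  rw [Lop, Xop_f q hq, Yop_f q hq, XXf q p, YYf q p]
  have hcf : cf q p ≤ 0 := by
    rw [cf]
    have : (0:ℝ) ≤ (q:ℝ) * ((1 + Rfun p) ^ (q+1))⁻¹ := by positivity
    linarith
  have hdrop1 : cf q p * (4*(p.1^2+p.2.1^2) + 8*p.1^2 + p.2.1^2/2) ≤ 0 :=
    mul_nonpos_of_nonpos_of_nonneg hcf (by positivity)
  have hdrop2 : cf q p * (4*(p.1^2+p.2.1^2) + 8*p.2.1^2 + p.1^2/2) ≤ 0 :=
    mul_nonpos_of_nonpos_of_nonneg hcf (by positivity)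
  have hS : XRf p ^ 2 + YRf p ^ 2 ≤ 16 * (1 + Rfun p) ^ 2 := by
    rw [XRf, YRf, Rfun]
    nlinarith [sq_nonneg (p.1^2 + p.2.1^2 - 1), sq_nonneg p.2.2, hρ, sq_nonneg (p.1*p.2.2), sq_nonneg (p.2.1*p.2.2), sq_nonneg ((p.1^2+p.2.1^2)*p.2.2), mul_nonneg hρ (sq_nonneg p.2.2)]
  have hkey : (q:ℝ)*((q:ℝ)+1)*((1 + Rfun p) ^ (q+1+1))⁻¹ * (XRf p ^ 2 + YRf p ^ 2)
      ≤ 16 * q * (q + 1) * ((1 + Rfun p) ^ q)⁻¹ := by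
    have hpow : ((1 + Rfun p) ^ (q+1+1))⁻¹ = ((1 + Rfun p) ^ q)⁻¹ * ((1 + Rfun p) ^ 2)⁻¹ := by
      rw [show q+1+1 = q+2 from rfl, pow_add, mul_inv]
    rw [hpow]
    have h1 : ((1 + Rfun p) ^ 2)⁻¹ * (XRf p ^ 2 + YRf p ^ 2) ≤ 16 := by
      rw [inv_mul_le_iff₀ (by positivity)]
      linarith
    have h2 : (0:ℝ) ≤ (q:ℝ)*((q:ℝ)+1)*((1 + Rfun p) ^ q)⁻¹ := by positivity
    calc (q:ℝ)*((q:ℝ)+1)*(((1 + Rfun p) ^ q)⁻¹ * ((1 + Rfun p) ^ 2)⁻¹) * (XRf p ^ 2 + YRf p ^ 2)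
        = (q:ℝ)*((q:ℝ)+1)*((1 + Rfun p) ^ q)⁻¹ * (((1 + Rfun p) ^ 2)⁻¹ * (XRf p ^ 2 + YRf p ^ 2)) := by ring
      _ ≤ (q:ℝ)*((q:ℝ)+1)*((1 + Rfun p) ^ q)⁻¹ * 16 := by
          exact mul_le_mul_of_nonneg_left h1 h2
      _ = 16 * q * (q + 1) * ((1 + Rfun p) ^ q)⁻¹ := by push_cast; ring
  nlinarith [hkey, hdrop1, hdrop2]
end

section
/- Let g be analytic on the open right half-plane {z ∈ ℂ : Re z > 0} and suppose there exist constants α, β > 0 with |g(z)| ≤ α e^{-β|z|} for all z with Re z > 0. Then g is identically zero. -/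
open Set Filter Complex Topology

/-- Key step: for any `lam > β`, Phragmén–Lindelöf in a horizontal strip gives
`|g(s+1)| * exp(lam*s) ≤ α * exp β` for all `s > 0`. -/
lemma key_strip_bound (g : ℂ → ℂ)
    (hg : DifferentiableOn ℂ g {z : ℂ | 0 < z.re})
    (α β : ℝ) (hα : 0 < α) (hβ : 0 < β)
    (hbound : ∀ z : ℂ, 0 < z.re → ‖g z‖ ≤ α * Real.exp (-β * ‖z‖))
    (lam : ℝ) (hlam : β < lam) (s : ℝ) (hs : 0 < s) :
    ‖g (s + 1)‖ * Real.exp (lam * s) ≤ α * Real.exp β := by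
  have hlam0 : 0 < lam := hβ.trans hlam
  set θ : ℝ := Real.arccos (β / lam) with hθdef
  have hc0 : 0 < β / lam := div_pos hβ hlam0
  have hc1 : β / lam < 1 := (div_lt_one hlam0).2 hlam
  have hθpos : 0 < θ := Real.arccos_pos.2 hc1
  have hθlt : θ < Real.pi / 2 := Real.arccos_lt_pi_div_two.2 hc0
  have hcosθ : Real.cos θ = β / lam := Real.cos_arccos (by linarith) hc1.le
  set H : ℂ → ℂ := fun w => g (Complex.exp w + 1) * Complex.exp (lam * Complex.exp w) with hHdef
  -- points in the closed strip map into the half-plane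
  have hmem : ∀ w : ℂ, |w.im| ≤ θ → 0 < (Complex.exp w + 1).re := by
    intro w hw
    have hcos : 0 ≤ Real.cos w.im := by
      apply Real.cos_nonneg_of_mem_Icc
      constructor <;> [nlinarith [abs_le.1 hw]; nlinarith [abs_le.1 hw]]
    have : (Complex.exp w + 1).re = Real.exp w.re * Real.cos w.im + 1 := by
      simp [Complex.add_re, Complex.exp_re]
    rw [this]
    nlinarith [Real.exp_pos w.re]
  -- norm computation
  have hnorm : ∀ w : ℂ, ‖H w‖ =
      ‖g (Complex.exp w + 1)‖ * Real.exp (lam * (Real.exp w.re * Real.cos w.im)) := by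
    intro w
    rw [hHdef]
    simp only [norm_mul, Complex.norm_exp]
    congr 2
    simp [Complex.exp_re]
  -- differentiability
  have hdiffIcc : DifferentiableOn ℂ H (Complex.im ⁻¹' Icc (-θ) θ) := by
    have hinner : Differentiable ℂ fun w : ℂ => Complex.exp w + 1 :=
      Complex.differentiable_exp.add_const 1
    have h1 : DifferentiableOn ℂ (fun w => g (Complex.exp w + 1))
        (Complex.im ⁻¹' Icc (-θ) θ) := by
      apply hg.comp hinner.differentiableOn
      intro w hw
      exact hmem w (abs_le.2 ⟨hw.1, hw.2⟩)
    exact h1.mul (Complex.differentiable_exp.comp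
      (Complex.differentiable_exp.const_mul _)).differentiableOn
  have hclsub : closure (Complex.im ⁻¹' Ioo (-θ) θ) ⊆ Complex.im ⁻¹' Icc (-θ) θ :=
    closure_minimal (preimage_mono Ioo_subset_Icc_self)
      (isClosed_Icc.preimage Complex.continuous_im)
  have hd : DiffContOnCl ℂ H (Complex.im ⁻¹' Ioo (-θ) θ) :=
    ⟨hdiffIcc.mono (preimage_mono Ioo_subset_Icc_self),
      (hdiffIcc.continuousOn).mono hclsub⟩
  -- growth bound
  have hB : ∃ c < Real.pi / (θ - -θ), ∃ B,
      H =O[comap (_root_.abs ∘ Complex.re) atTop ⊓ 𝓟 (Complex.im ⁻¹' Ioo (-θ) θ)]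
        fun w => Real.exp (B * Real.exp (c * |w.re|)) := by
    refine ⟨1, ?_, lam, ?_⟩
    · rw [sub_neg_eq_add]
      rw [lt_div_iff₀ (by linarith)]
      linarith
    · rw [Asymptotics.isBigO_iff]
      refine ⟨α, Filter.Eventually.filter_mono inf_le_right ?_⟩
      rw [Filter.eventually_principal]
      intro w hw
      have hw' : |w.im| ≤ θ := le_of_lt (abs_lt.2 ⟨(mem_Ioo.1 hw).1, (mem_Ioo.1 hw).2⟩)
      rw [hnorm]
      have hg1 : ‖g (Complex.exp w + 1)‖ ≤ α := by
        refine (hbound _ (hmem w hw')).trans ?_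
        nlinarith [Real.exp_le_one_iff.2
          (by nlinarith [norm_nonneg (Complex.exp w + 1)] :
              -β * ‖Complex.exp w + 1‖ ≤ 0)]
      have hexp1 : Real.exp (lam * (Real.exp w.re * Real.cos w.im)) ≤
          Real.exp (lam * Real.exp (1 * |w.re|)) := by
        apply Real.exp_le_exp.2
        have h1 : Real.exp w.re ≤ Real.exp (1 * |w.re|) := by
          apply Real.exp_le_exp.2; rw [one_mul]; exact le_abs_self _
        have h2 : Real.exp w.re * Real.cos w.im ≤ Real.exp w.re :=
          mul_le_of_le_one_right (Real.exp_pos w.re).le (Real.cos_le_one w.im)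
        nlinarith
      have hpos : 0 < Real.exp (lam * Real.exp (1 * |w.re|)) := Real.exp_pos _
      rw [Real.norm_eq_abs, abs_of_pos hpos]
      nlinarith [norm_nonneg (g (Complex.exp w + 1)), Real.exp_pos
        (lam * (Real.exp w.re * Real.cos w.im))]
  -- boundary bound
  have hbnd : ∀ w : ℂ, |w.im| = θ → ‖H w‖ ≤ α * Real.exp β := by
    intro w hw
    have hw' : |w.im| ≤ θ := hw.le
    have hcosw : Real.cos w.im = β / lam := by
      rcases abs_eq (le_of_lt hθpos) |>.1 hw with h | h
      · rw [h, hcosθ]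
      · rw [h, Real.cos_neg, hcosθ]
    rw [hnorm, hcosw]
    have he : lam * (Real.exp w.re * (β / lam)) = β * Real.exp w.re := by
      field_simp
    rw [he]
    have htri : Real.exp w.re - 1 ≤ ‖Complex.exp w + 1‖ := by
      have h1 : ‖Complex.exp w‖ ≤ ‖Complex.exp w + 1‖ + 1 := by
        calc ‖Complex.exp w‖ = ‖(Complex.exp w + 1) + (-1)‖ := by ring_nf
          _ ≤ ‖Complex.exp w + 1‖ + ‖-1‖ :=
              norm_add_le _ _
          _ = ‖Complex.exp w + 1‖ + 1 := by simp
      rw [Complex.norm_exp] at h1; linarith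
    have hg1 : ‖g (Complex.exp w + 1)‖ ≤
        α * Real.exp (-β * (Real.exp w.re - 1)) := by
      refine (hbound _ (hmem w hw')).trans ?_
      have : Real.exp (-β * ‖Complex.exp w + 1‖) ≤
          Real.exp (-β * (Real.exp w.re - 1)) := by
        apply Real.exp_le_exp.2; nlinarith
      nlinarith [Real.exp_pos (-β * ‖Complex.exp w + 1‖)]
    calc ‖g (Complex.exp w + 1)‖ * Real.exp (β * Real.exp w.re)
        ≤ (α * Real.exp (-β * (Real.exp w.re - 1))) * Real.exp (β * Real.exp w.re) := by
          nlinarith [Real.exp_pos (β * Real.exp w.re)]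
      _ = α * Real.exp β := by
          rw [mul_assoc, ← Real.exp_add]; congr 2; ring
  -- apply Phragmén–Lindelöf
  have hmain := PhragmenLindelof.horizontal_strip (f := H) (z := (Real.log s : ℂ))
    (C := α * Real.exp β) hd hB
    (fun w hw => hbnd w (by rw [hw, abs_neg, abs_of_pos hθpos]))
    (fun w hw => hbnd w (by rw [hw, abs_of_pos hθpos]))
    (by simp; linarith) (by simp; linarith)
  -- unfold `H (log s)`
  have hexps : Complex.exp ((Real.log s : ℝ) : ℂ) = (s : ℂ) := by
    rw [← Complex.ofReal_exp, Real.exp_log hs]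
  rw [hnorm, hexps] at hmain
  simpa [Real.exp_log hs] using hmain

theorem analytic_half_plane_exp_decay_eq_zero (g : ℂ → ℂ)
    (hg : DifferentiableOn ℂ g {z : ℂ | 0 < z.re})
    (α β : ℝ) (hα : 0 < α) (hβ : 0 < β)
    (hbound : ∀ z : ℂ, 0 < z.re → ‖g z‖ ≤ α * Real.exp (-β * ‖z‖)) :
    ∀ z : ℂ, 0 < z.re → g z = 0 := by
  set f : ℂ → ℂ := fun z => g (z + 1) with hfdef
  have hmem : ∀ z : ℂ, 0 ≤ z.re → 0 < (z + 1).re := by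
    intro z hz; simp [Complex.add_re]; linarith
  have hfle : ∀ z : ℂ, 0 ≤ z.re → ‖f z‖ ≤ α := by
    intro z hz
    rw [hfdef]
    show ‖g (z + 1)‖ ≤ _
    refine (hbound _ (hmem z hz)).trans ?_
    nlinarith [Real.exp_le_one_iff.2
      (by nlinarith [norm_nonneg (z + 1)] : -β * ‖z + 1‖ ≤ 0)]
  -- differentiability of f up to the boundary
  have hfd : DiffContOnCl ℂ f {z : ℂ | 0 ≤ z.re} →
      True := fun _ => trivial
  have hfdiff : DifferentiableOn ℂ f {z : ℂ | 0 ≤ z.re} := by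
    apply hg.comp ((differentiable_id.add_const 1).differentiableOn)
    intro z hz; exact hmem z hz
  have hd : DiffContOnCl ℂ f {z : ℂ | 0 < z.re} := by
    refine ⟨hfdiff.mono (fun z hz => (le_of_lt hz : (0:ℝ) ≤ z.re)), hfdiff.continuousOn.mono ?_⟩
    rw [Complex.closure_setOf_lt_re]
  -- growth: f is bounded on the half-plane
  have hexp : ∃ c < (2 : ℝ), ∃ B, f =O[Bornology.cobounded ℂ ⊓ 𝓟 {z : ℂ | 0 < z.re}]
      fun z => Real.exp (B * ‖z‖ ^ c) := by
    refine ⟨1, one_lt_two, 0, Asymptotics.IsBigO.of_bound α ?_⟩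
    refine Filter.Eventually.filter_mono inf_le_right ?_
    rw [Filter.eventually_principal]
    intro z hz
    have : ‖Real.exp (0 * ‖z‖ ^ (1 : ℝ))‖ = 1 := by
      simp
    rw [this, mul_one]
    exact hfle z (le_of_lt hz)
  -- superexponential decay on the real axis
  have hre : Asymptotics.SuperpolynomialDecay atTop Real.exp fun x : ℝ => ‖f x‖ := by
    intro n
    have hupper : Tendsto (fun x : ℝ => α * Real.exp β * Real.exp (-((β + 1) * x)))
        atTop (𝓝 0) := by
      have h1 : Tendsto (fun x : ℝ => (β + 1) * x) atTop atTop :=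
        Tendsto.const_mul_atTop (by linarith) tendsto_id
      have h2 : Tendsto (fun x : ℝ => -((β + 1) * x)) atTop atBot :=
        tendsto_neg_atBot_iff.2 h1
      have h3 := Real.tendsto_exp_atBot.comp h2
      simpa using (tendsto_const_nhds (x := α * Real.exp β)).mul h3
    refine tendsto_of_tendsto_of_tendsto_of_le_of_le' tendsto_const_nhds hupper ?_ ?_
    · filter_upwards with x
      positivity
    · filter_upwards [eventually_gt_atTop 0] with x hx
      set lam : ℝ := β + n + 1 with hlamdef
      have hlam : β < lam := by rw [hlamdef]; push_cast; linarith [Nat.cast_nonneg (α := ℝ) n]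
      have hk := key_strip_bound g hg α β hα hβ hbound lam hlam x hx
      have hfx : ‖f (x : ℂ)‖ = ‖g ((x : ℂ) + 1)‖ := rfl
      have hbd : ‖f (x : ℂ)‖ ≤ α * Real.exp β * Real.exp (-(lam * x)) := by
        have hpos : 0 < Real.exp (lam * x) := Real.exp_pos _
        rw [hfx, Real.exp_neg, ← div_eq_mul_inv]
        exact (le_div_iff₀ hpos).2 hk
      calc Real.exp x ^ n * ‖f (x : ℂ)‖
          ≤ Real.exp x ^ n * (α * Real.exp β * Real.exp (-(lam * x))) := by
            have : (0:ℝ) ≤ Real.exp x ^ n := by positivity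
            nlinarith [norm_nonneg (f (x : ℂ))]
        _ = α * Real.exp β * Real.exp (-((β + 1) * x)) := by
            rw [← Real.exp_nat_mul, mul_left_comm, ← Real.exp_add]
            congr 2
            rw [hlamdef]; push_cast; ring
  -- boundedness on the imaginary axis
  have him : ∃ C, ∀ x : ℝ, ‖f ((x : ℂ) * I)‖ ≤ C := by
    refine ⟨α, fun x => hfle _ ?_⟩
    simp
  have hzero := PhragmenLindelof.eq_zero_on_right_half_plane_of_superexponential_decay
    hd hexp hre him
  -- identity theorem
  have hU : IsOpen {z : ℂ | 0 < z.re} := isOpen_lt continuous_const Complex.continuous_re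
  have hAnal : AnalyticOnNhd ℂ g {z : ℂ | 0 < z.re} := hg.analyticOnNhd hU
  have hPre : IsPreconnected {z : ℂ | 0 < z.re} := (convex_halfSpace_re_gt 0).isPreconnected
  have h2 : (2 : ℂ) ∈ {z : ℂ | 0 < z.re} := by simp
  have hev : g =ᶠ[𝓝 (2 : ℂ)] 0 := by
    have hball : Metric.ball (2 : ℂ) 1 ∈ 𝓝 (2 : ℂ) := Metric.ball_mem_nhds _ one_pos
    refine Filter.eventually_of_mem hball ?_
    intro w hw
    have hre1 : 1 < w.re := by
      have h1 : |(w - 2).re| ≤ ‖w - 2‖ := Complex.abs_re_le_norm _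
      have h2' : ‖w - 2‖ < 1 := by
        rwa [Metric.mem_ball, Complex.dist_eq] at hw
      have : |w.re - 2| < 1 := by
        simpa [Complex.sub_re] using lt_of_le_of_lt h1 h2'
      cases' abs_lt.1 this with hl hr
      linarith
    have : f (w - 1) = 0 := hzero (by simp [Complex.sub_re]; linarith)
    simpa [hfdef] using this
  have := hAnal.eqOn_zero_of_preconnected_of_eventuallyEq_zero hPre h2 hev
  intro z hz
  exact this hz
end
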